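/- Define ϱ₀ on ℝ³ by letting its unit ball be the convex hull of the eight points (±1,±1,±1) together with the Euclidean ball of radius √2, and set ϱ(r,s,t) = (|r|+|s|)/4 + ϱ₀(r,s,t)/2. Then ϱ satisfies (|r|+|s|)/2 ≤ ϱ(r,s,t) ≤ max{|r|,|s|,|t|} and ϱ(r',s,t) ≥ ϱ(r,s,t) + (r'−r)/4 for r,s,t > 0 and 0 < r < r'. -/

import Mathlib

/-!
The unit body `B` of `ϱ₀` contains the cube `[-1,1]³`, the convex hull of its vertices, and lies
in the convex set `|r| + |s| ≤ 2`, which contains both the vertices and the ball of radius `√2`.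
Comparing gauges gives `(|r| + |s|)/2 ≤ ϱ₀ ≤ max{|r|, |s|, |t|}`. Since `B` is invariant under
`r ↦ -r`, writing `(r,s,t)` as a convex combination of `(r',s,t)` and `(-r',s,t)` and using
convexity of the gauge shows that `ϱ₀` is monotone in `|r|`; the `ℓ¹` term of `ϱ` then supplies
the increment `(r' - r)/4`.
-/

/-- `ϱ₀` is the Minkowski gauge of the convex hull of the eight points `(±1,±1,±1)`
together with the Euclidean ball of radius `√2` in `ℝ³`. -/
noncomputable def rho0 : EuclideanSpace ℝ (Fin 3) → ℝ :=
  gauge (convexHull ℝ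
    ({v : EuclideanSpace ℝ (Fin 3) | ∀ i, |v i| = 1}
      ∪ Metric.closedBall (0 : EuclideanSpace ℝ (Fin 3)) (Real.sqrt 2)))

/-- `ϱ(r,s,t) = (|r|+|s|)/4 + ϱ₀(r,s,t)/2`. -/
noncomputable def rho (v : EuclideanSpace ℝ (Fin 3)) : ℝ :=
  (|v 0| + |v 1|) / 4 + rho0 v / 2

open Set Metric

section Gauge

variable {E F : Type*} [AddCommGroup E] [Module ℝ E] [AddCommGroup F] [Module ℝ F]
  {s : Set E}

theorem Seminorm.div_le_gauge_of_subset_closedBall (p : Seminorm ℝ E) {r : ℝ}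
    (hs : Absorbent ℝ s) (hr : 0 < r) (hsr : s ⊆ p.closedBall 0 r) (x : E) :
    p x / r ≤ gauge s x := by
  refine le_of_forall_gt_imp_ge_of_dense fun a ha => ?_
  obtain ⟨b, hb, hba, c, hc, rfl⟩ := exists_lt_of_gauge_lt hs ha
  have hpc : p c ≤ r := p.mem_closedBall_zero.1 (hsr hc)
  rw [map_smul_eq_mul, Real.norm_of_nonneg hb.le, div_le_iff₀ hr]
  nlinarith

theorem gauge_map_le_of_mapsTo (f : E →ₗ[ℝ] F) {t : Set F} (hs : Absorbent ℝ s)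
    (hf : MapsTo f s t) (x : E) : gauge t (f x) ≤ gauge s x := by
  refine le_of_forall_gt_imp_ge_of_dense fun a ha => ?_
  obtain ⟨b, hb, hba, c, hc, rfl⟩ := exists_lt_of_gauge_lt hs ha
  rw [map_smul]
  exact (gauge_le_of_mem hb.le (smul_mem_smul_set (hf hc))).trans hba.le

end Gauge

namespace EuclideanSpace

variable {ι : Type*}

theorem setOf_forall_abs_le_one_subset_convexHull [Finite ι] :
    {v : EuclideanSpace ℝ ι | ∀ i, |v i| ≤ 1} ⊆ convexHull ℝ {v | ∀ i, |v i| = 1} := by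
  intro v hv
  have hpi : WithLp.ofLp v ∈ convexHull ℝ (univ.pi fun _ : ι => ({-1, 1} : Set ℝ)) := by
    rw [convexHull_pi]
    intro i _
    rw [convexHull_pair, segment_eq_Icc (by norm_num)]
    exact abs_le.1 (hv i)
  have hv : v ∈ convexHull ℝ
      ((WithLp.linearEquiv 2 ℝ (ι → ℝ)).symm.toLinearMap '' univ.pi fun _ => {-1, 1}) := by
    rw [← LinearMap.image_convexHull]
    exact ⟨_, hpi, rfl⟩
  refine convexHull_mono ?_ hv
  rintro _ ⟨w, hw, rfl⟩ i
  rcases hw i (mem_univ i) with h | h <;> simp_all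

theorem gauge_le_of_forall_abs_apply_le {s : Set (EuclideanSpace ℝ ι)}
    (hs : {v : EuclideanSpace ℝ ι | ∀ i, |v i| ≤ 1} ⊆ s) {v : EuclideanSpace ℝ ι} {M : ℝ}
    (hM : 0 ≤ M) (hv : ∀ i, |v i| ≤ M) : gauge s v ≤ M := by
  refine le_of_forall_gt_imp_ge_of_dense fun a ha => gauge_le_of_mem (hM.trans ha.le) ?_
  have ha0 : 0 < a := hM.trans_lt ha
  rw [mem_smul_set_iff_inv_smul_mem₀ ha0.ne']
  refine hs fun i => ?_
  rw [PiLp.smul_apply, smul_eq_mul, abs_mul, abs_inv, abs_of_pos ha0, inv_mul_le_one₀ ha0]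
  exact (hv i).trans ha.le

variable [Fintype ι] [DecidableEq ι]

noncomputable def reflectCoord (k : ι) : EuclideanSpace ℝ ι ≃ₗᵢ[ℝ] EuclideanSpace ℝ ι :=
  LinearIsometryEquiv.piLpCongrRight 2
    fun i => if i = k then LinearIsometryEquiv.neg ℝ else LinearIsometryEquiv.refl ℝ ℝ

theorem reflectCoord_apply_self (k : ι) (v : EuclideanSpace ℝ ι) :
    reflectCoord k v k = -v k := by
  simp [reflectCoord]

theorem reflectCoord_apply_of_ne {i k : ι} (h : i ≠ k) (v : EuclideanSpace ℝ ι) :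
    reflectCoord k v i = v i := by
  simp [reflectCoord, h]

theorem abs_reflectCoord_apply (k : ι) (v : EuclideanSpace ℝ ι) (i : ι) :
    |reflectCoord k v i| = |v i| := by
  obtain rfl | h := eq_or_ne i k
  · rw [reflectCoord_apply_self, abs_neg]
  · rw [reflectCoord_apply_of_ne h]

theorem gauge_le_of_abs_apply_le {s : Set (EuclideanSpace ℝ ι)} (hs : Convex ℝ s)
    (hs₀ : Absorbent ℝ s) {k : ι} (hk : MapsTo (reflectCoord k) s s)
    {x y : EuclideanSpace ℝ ι} (hxy : |x k| ≤ |y k|) (heq : ∀ i ≠ k, x i = y i) :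
    gauge s x ≤ gauge s y := by
  set c := x k / y k
  have hc : |c| ≤ 1 := by
    rw [abs_div]; exact div_le_one_of_le₀ hxy (abs_nonneg _)
  obtain ⟨hc₁, hc₂⟩ := abs_le.1 hc
  have hx : x = ((1 + c) / 2) • y + ((1 - c) / 2) • reflectCoord k y := by
    ext i
    obtain rfl | h := eq_or_ne i k
    · have hcy : c * y i = x i := div_mul_cancel_of_imp fun h0 => by
        simpa [h0] using hxy
      simp only [PiLp.add_apply, PiLp.smul_apply, smul_eq_mul, reflectCoord_apply_self, mul_neg]
      linear_combination -hcy
    · simp only [PiLp.add_apply, PiLp.smul_apply, smul_eq_mul, reflectCoord_apply_of_ne h,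
        heq i h]
      ring
  calc gauge s x
      ≤ (1 + c) / 2 * gauge s y + (1 - c) / 2 * gauge s (reflectCoord k y) := by
        rw [hx]
        refine (gauge_add_le hs hs₀ _ _).trans_eq ?_
        rw [gauge_smul_of_nonneg (by linarith), gauge_smul_of_nonneg (by linarith), smul_eq_mul,
          smul_eq_mul]
    _ ≤ (1 + c) / 2 * gauge s y + (1 - c) / 2 * gauge s y := by
        gcongr
        exact gauge_map_le_of_mapsTo (reflectCoord k).toLinearEquiv.toLinearMap hs₀ hk y
    _ = gauge s y := by ring

end EuclideanSpace

open EuclideanSpace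

-- `rho0` is `gauge unitBody` by definition.
noncomputable def unitBody : Set (EuclideanSpace ℝ (Fin 3)) :=
  convexHull ℝ ({v | ∀ i, |v i| = 1} ∪ closedBall 0 √2)

theorem convex_unitBody : Convex ℝ unitBody := convex_convexHull ℝ _

theorem absorbent_unitBody : Absorbent ℝ unitBody :=
  (absorbent_ball_zero (by positivity)).mono <|
    ball_subset_closedBall.trans <| subset_union_right.trans (subset_convexHull ℝ _)

theorem setOf_forall_abs_le_one_subset_unitBody :
    {v : EuclideanSpace ℝ (Fin 3) | ∀ i, |v i| ≤ 1} ⊆ unitBody :=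
  setOf_forall_abs_le_one_subset_convexHull.trans (convexHull_mono subset_union_left)

theorem mapsTo_reflectCoord_unitBody (k : Fin 3) : MapsTo (reflectCoord k) unitBody unitBody := by
  rw [mapsTo_iff_image_subset]
  refine ((reflectCoord k).toLinearEquiv.toLinearMap.image_convexHull _).trans_subset
    (convexHull_mono ?_)
  rintro _ ⟨v, hv | hv, rfl⟩
  · exact .inl fun i => (abs_reflectCoord_apply k v i).trans (hv i)
  · exact .inr (by simpa using hv)

noncomputable def absAddAbsSeminorm : Seminorm ℝ (EuclideanSpace ℝ (Fin 3)) :=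
  (normSeminorm ℝ ℝ).comp (proj 0 : EuclideanSpace ℝ (Fin 3) →L[ℝ] ℝ).toLinearMap +
    (normSeminorm ℝ ℝ).comp (proj 1 : EuclideanSpace ℝ (Fin 3) →L[ℝ] ℝ).toLinearMap

theorem absAddAbsSeminorm_apply (v : EuclideanSpace ℝ (Fin 3)) :
    absAddAbsSeminorm v = |v 0| + |v 1| := rfl

theorem unitBody_subset_closedBall : unitBody ⊆ absAddAbsSeminorm.closedBall 0 2 := by
  refine convexHull_min (union_subset ?_ ?_) (Seminorm.convex_closedBall _ _ _) <;>
    intro v hv <;> rw [Seminorm.mem_closedBall_zero, absAddAbsSeminorm_apply]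
  · rw [hv 0, hv 1]; norm_num
  · have hv : ‖v‖ ^ 2 ≤ 2 := by
      rw [mem_closedBall_zero_iff] at hv
      calc ‖v‖ ^ 2 ≤ √2 ^ 2 := by gcongr
        _ = 2 := Real.sq_sqrt zero_le_two
    rw [EuclideanSpace.norm_sq_eq, Fin.sum_univ_three] at hv
    simp only [Real.norm_eq_abs, sq_abs] at hv
    nlinarith [sq_nonneg (|v 0| - |v 1|), sq_abs (v 0), sq_abs (v 1), sq_nonneg (v 2)]

theorem abs_add_abs_div_two_le_rho0 (v : EuclideanSpace ℝ (Fin 3)) :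
    (|v 0| + |v 1|) / 2 ≤ rho0 v :=
  absAddAbsSeminorm.div_le_gauge_of_subset_closedBall absorbent_unitBody two_pos
    unitBody_subset_closedBall v

theorem rho0_le_max (v : EuclideanSpace ℝ (Fin 3)) :
    rho0 v ≤ max (max |v 0| |v 1|) |v 2| := by
  refine gauge_le_of_forall_abs_apply_le setOf_forall_abs_le_one_subset_unitBody
    (by positivity) fun i => ?_
  fin_cases i <;> simp

theorem rho0_le_rho0_of_abs_le {r r' : ℝ} (h : |r| ≤ |r'|) (s t : ℝ) :
    rho0 (WithLp.toLp 2 ![r, s, t]) ≤ rho0 (WithLp.toLp 2 ![r', s, t]) :=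
  gauge_le_of_abs_apply_le convex_unitBody absorbent_unitBody (mapsTo_reflectCoord_unitBody 0)
    (by simpa using h) fun i hi => by fin_cases i <;> simp_all

/-- The norm `ϱ` satisfies `(|r|+|s|)/2 ≤ ϱ(r,s,t) ≤ max{|r|,|s|,|t|}` and
`ϱ(r',s,t) ≥ ϱ(r,s,t) + (r'−r)/4` for `r,s,t > 0`, `0 < r < r'`. -/
theorem stmt5 :
    (∀ v : EuclideanSpace ℝ (Fin 3),
      (|v 0| + |v 1|) / 2 ≤ rho v ∧ rho v ≤ max (max |v 0| |v 1|) |v 2|)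
    ∧ (∀ r r' s t : ℝ, 0 < r → r < r' → 0 < s → 0 < t →
        rho (WithLp.toLp 2 ![r, s, t] : EuclideanSpace ℝ (Fin 3)) + (r' - r) / 4
          ≤ rho (WithLp.toLp 2 ![r', s, t] : EuclideanSpace ℝ (Fin 3))) := by
  refine ⟨fun v => ⟨?_, ?_⟩, fun r r' s t hr hrr _ _ => ?_⟩
  · have := abs_add_abs_div_two_le_rho0 v
    rw [rho]; linarith
  · have := rho0_le_max v
    have h0 : |v 0| ≤ max (max |v 0| |v 1|) |v 2| := le_max_of_le_left (le_max_left _ _)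
    have h1 : |v 1| ≤ max (max |v 0| |v 1|) |v 2| := le_max_of_le_left (le_max_right _ _)
    rw [rho]; linarith
  · have := rho0_le_rho0_of_abs_le (abs_le_abs_of_nonneg hr.le hrr.le) s t
    simp only [rho, Matrix.cons_val_zero, Matrix.cons_val_one, abs_of_pos hr,
      abs_of_pos (hr.trans hrr)]
    linarith
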